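/- arXiv:math/9904045 — 2 statements merged into one kernel-verified Lean document; each statement's English description precedes it below -/
import Mathlib

section
/- (Du) Suppose that for every j ∈ I one has bar(m'_j) = Σ_{i ∈ I, i ≤ j} a_{ij} m'_i with a_{ij} ∈ A and a_{jj} = 1. Then there exists a unique basis {c_i}_{i ∈ I} of the A⁻-module L such that bar(c_i) = c_i and π(c_i) = π(m'_i) for all i ∈ I. -/
/-! Common setup: Laurent polynomials, Coxeter combinatorics, the Hecke algebra and
its generalized Temperley–Lieb quotient, axiomatized via structures. -/

noncomputable section

open LaurentPolynomial Pointwise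

/-- The ring `A = ℤ[v,v⁻¹]` of Laurent polynomials over `ℤ`. -/
abbrev 𝔸 : Type := LaurentPolynomial ℤ

/-- The element `v`. -/
def vv : 𝔸 := LaurentPolynomial.T 1

/-- The element `v⁻¹`. -/
def vinv : 𝔸 := LaurentPolynomial.T (-1)

/-- The parameter `q = v²`. -/
def qpar : 𝔸 := LaurentPolynomial.T 2

/-- The element `q_c = v + v⁻¹`. -/
def qc : 𝔸 := vv + vinv

/-- The subset `ℤ[q] ⊆ A` of integer polynomials in `q = v²`. -/
def Zq : Set 𝔸 := Set.range fun p : Polynomial ℤ => Polynomial.aeval qpar p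

/-- The subset `v⁻¹ ℤ[v⁻¹] ⊆ A` of Laurent polynomials in which only strictly
negative powers of `v` occur. -/
def negA : Set 𝔸 := {a | ∃ p : Polynomial ℤ, a = vinv * Polynomial.aeval vinv p}

/-- The subring `A⁻ = ℤ[v⁻¹] ⊆ A`. -/
def Aneg : Subring 𝔸 := Subring.closure {vinv}

lemma vinv_mem_Aneg : vinv ∈ Aneg := Subring.subset_closure rfl

namespace TLpaper

variable {B W : Type} [Group W] {M : CoxeterMatrix B}

/-- `s` and `t` correspond to adjacent nodes of the Coxeter graph joined by a bond of
finite strength (recall that in a Coxeter matrix, `0` codes a bond of infinite strength). -/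
def AdjFin (M : CoxeterMatrix B) (s t : B) : Prop := 3 ≤ M s t

/-- The dihedral (standard parabolic) subgroup `⟨s,t⟩` of `W`, as a set. -/
def dih (cs : CoxeterSystem M W) (s t : B) : Set W :=
  (Subgroup.closure {cs.simple s, cs.simple t} : Subgroup W)

/-- The longest element `w_{st}` of the finite dihedral group `⟨s,t⟩`. -/
def wD (cs : CoxeterSystem M W) (s t : B) : W :=
  cs.wordProd (CoxeterSystem.alternatingWord s t (M s t))

/-- `w` is a complex element of `W`. -/
def IsComplex (cs : CoxeterSystem M W) (w : W) : Prop :=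
  ∃ s t x₁ x₂, AdjFin M s t ∧ w = x₁ * wD cs s t * x₂ ∧
    cs.length w = cs.length x₁ + cs.length (wD cs s t) + cs.length x₂

/-- `W_c`, the set of non-complex elements of `W`. -/
def Wc (cs : CoxeterSystem M W) : Set W := {w | ¬ IsComplex cs w}

/-- The Bruhat–Chevalley order on `W`: `x ≤ w` iff some reduced word for `w` has a
subword which is a word for `x`. -/
def bruhatLE (cs : CoxeterSystem M W) (x w : W) : Prop :=
  ∃ l : List B, cs.IsReduced l ∧ cs.wordProd l = w ∧
    ∃ l' : List B, l'.Sublist l ∧ cs.wordProd l' = x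

/-- The strict Bruhat–Chevalley order. -/
def bruhatLT (cs : CoxeterSystem M W) (x w : W) : Prop := bruhatLE cs x w ∧ x ≠ w

/-- The Hecke algebra of `(W,S)` over `A`: an associative unital `A`-algebra `H`
with a free `A`-basis `{T_w : w ∈ W}` satisfying the defining multiplication rules. -/
structure Hecke (cs : CoxeterSystem M W) (H : Type) [Ring H] [Algebra 𝔸 H] where
  TT : Module.Basis W 𝔸 H
  TT_one : TT 1 = 1
  TT_mul_gt : ∀ (s : B) (w : W), cs.length w < cs.length (cs.simple s * w) →
    TT (cs.simple s) * TT w = TT (cs.simple s * w)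
  TT_mul_lt : ∀ (s : B) (w : W), cs.length (cs.simple s * w) < cs.length w →
    TT (cs.simple s) * TT w = qpar • TT (cs.simple s * w) + (qpar - 1) • TT w

/-- The generators `Σ_{w ∈ ⟨s,t⟩} T_w` of the ideal `J(X)`. -/
def Jgens (cs : CoxeterSystem M W) {H : Type} [Ring H] [Algebra 𝔸 H]
    (h : Hecke cs H) : Set H :=
  {z | ∃ s t : B, AdjFin M s t ∧ z = ∑ᶠ w ∈ dih cs s t, h.TT w}

/-- The two-sided ideal `J(X)` of `H(X)`. -/
def Jideal (cs : CoxeterSystem M W) {H : Type} [Ring H] [Algebra 𝔸 H]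
    (h : Hecke cs H) : TwoSidedIdeal H :=
  TwoSidedIdeal.span (Jgens cs h)

/-- The generalized Temperley–Lieb algebra `TL(X) = H(X)/J(X)`, axiomatized as a
surjective `A`-algebra homomorphism `pr : H → TL` whose kernel is `J(X)`. -/
structure TLQuot (cs : CoxeterSystem M W) (H : Type) [Ring H] [Algebra 𝔸 H]
    (TL : Type) [Ring TL] [Algebra 𝔸 TL] (h : Hecke cs H) where
  pr : H →ₐ[𝔸] TL
  surj : Function.Surjective pr
  ker : ∀ x : H, pr x = 0 ↔ x ∈ Jideal cs h

end TLpaper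

namespace TLpaper

variable {B W : Type} [Group W] {M : CoxeterMatrix B}

/-- The bar involution on `TL(X)`: a ℤ-linear ring automorphism of order 2 sending
`v` to `v⁻¹` (equivalently, semilinear with respect to `T n ↦ T (-n)` on `A`) and
`t_w` to `(t_{w⁻¹})⁻¹`. -/
structure BarTL (TL : Type) [Ring TL] [Algebra 𝔸 TL] (t : W → TL) where
  bar : TL ≃+* TL
  invol : ∀ x : TL, bar (bar x) = x
  semi : ∀ (n : ℤ) (x : TL), bar ((LaurentPolynomial.T n : 𝔸) • x) = (LaurentPolynomial.T (-n) : 𝔸) • bar x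
  bar_t_mul : ∀ w : W, bar (t w) * t w⁻¹ = 1
  mul_bar_t : ∀ w : W, t w⁻¹ * bar (t w) = 1

/-- The element `b_s = v⁻¹ t_s + v⁻¹ t_e` of `TL(X)`. -/
def bgen (cs : CoxeterSystem M W) {TL : Type} [Ring TL] [Algebra 𝔸 TL]
    (t : W → TL) (s : B) : TL :=
  vinv • t (cs.simple s) + vinv • t 1

/-- The monomial `b_{s₁} b_{s₂} ⋯ b_{s_r}` attached to a word `s₁ s₂ ⋯ s_r`. -/
def bprod (cs : CoxeterSystem M W) {TL : Type} [Ring TL] [Algebra 𝔸 TL]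
    (t : W → TL) (l : List B) : TL :=
  (l.map (bgen cs t)).prod

/-- The element `m'_w = v^{-ℓ(w)} t_w` of `TL(X)`. -/
def mpr (cs : CoxeterSystem M W) {TL : Type} [Ring TL] [Algebra 𝔸 TL]
    (t : W → TL) (w : W) : TL :=
  (LaurentPolynomial.T (-(cs.length w : ℤ)) : 𝔸) • t w

/-- A Coxeter graph is simply laced if all its bonds have strength 2 or 3. -/
def SimplyLaced (M : CoxeterMatrix B) : Prop :=
  ∀ s t : B, s ≠ t → M s t = 2 ∨ M s t = 3

end TLpaper

namespace TLpaper

/-- Build a simply-laced Coxeter matrix from a symmetric, irreflexive adjacency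
relation: adjacent nodes get bond strength 3, non-adjacent distinct nodes get 2. -/
def ofAdj {B : Type} [DecidableEq B] (adj : B → B → Bool)
    (hsymm : ∀ i j, adj i j = adj j i) : CoxeterMatrix B where
  M := Matrix.of fun i j => if i = j then 1 else if adj i j then 3 else 2
  isSymm := by
    unfold Matrix.IsSymm
    ext i j
    simp only [Matrix.transpose_apply, Matrix.of_apply, hsymm i j]
    by_cases h : i = j
    · subst h; simp
    · rw [if_neg h, if_neg (Ne.symm h)]
  diagonal := by simp
  off_diagonal := by
    intro i j h
    simp only [Matrix.of_apply, h, if_false]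
    split <;> simp

/-- The Coxeter matrix of type `Aₙ`: a line of `n` nodes `0, 1, …, n-1`. -/
def AMat (n : ℕ) : CoxeterMatrix (Fin n) :=
  ofAdj (fun i j => decide (i.1 + 1 = j.1 ∨ j.1 + 1 = i.1))
    (by intro i j; simp only [decide_eq_decide]; tauto)

/-- The Coxeter matrix of type `Dₙ`: a line of nodes `1, …, n-1` together with a
node `0` joined only to node `2`. -/
def DMat (n : ℕ) : CoxeterMatrix (Fin n) :=
  ofAdj (fun i j => decide ((1 ≤ i.1 ∧ 1 ≤ j.1 ∧ (i.1 + 1 = j.1 ∨ j.1 + 1 = i.1)) ∨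
      (i.1 = 0 ∧ j.1 = 2) ∨ (j.1 = 0 ∧ i.1 = 2)))
    (by intro i j; simp only [decide_eq_decide]; tauto)

/-- The Coxeter matrix of type `Eₙ` (arbitrary rank): a line of nodes `1, …, n-1`
together with a node `0` joined only to node `3`. -/
def EMat (n : ℕ) : CoxeterMatrix (Fin n) :=
  ofAdj (fun i j => decide ((1 ≤ i.1 ∧ 1 ≤ j.1 ∧ (i.1 + 1 = j.1 ∨ j.1 + 1 = i.1)) ∨
      (i.1 = 0 ∧ j.1 = 3) ∨ (j.1 = 0 ∧ i.1 = 3)))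
    (by intro i j; simp only [decide_eq_decide]; tauto)

/-- A Coxeter matrix is of type `ADE` if, up to relabelling of the nodes, it is of
type `Aₙ` (n ≥ 1), `Dₙ` (n ≥ 4), or `Eₙ` (n ≥ 6, arbitrary rank). -/
def IsADE {B : Type} (M : CoxeterMatrix B) : Prop :=
  ∃ (n : ℕ) (e : B ≃ Fin n),
    (1 ≤ n ∧ ∀ i j, M i j = AMat n (e i) (e j)) ∨
    (4 ≤ n ∧ ∀ i j, M i j = DMat n (e i) (e j)) ∨
    (6 ≤ n ∧ ∀ i j, M i j = EMat n (e i) (e j))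

end TLpaper

namespace TLpaper

variable {B W : Type} [Group W] {M : CoxeterMatrix B}

/-- The image `t_w` of the basis element `T_w` in `TL(X)`. -/
def tElt (cs : CoxeterSystem M W) {H : Type} [Ring H] [Algebra 𝔸 H]
    {TL : Type} [Ring TL] [Algebra 𝔸 TL] (h : Hecke cs H) (tl : TLQuot cs H TL h) :
    W → TL := fun w => tl.pr (h.TT w)

/-- The `A⁻`-lattice `L ⊆ TL(X)` spanned by `{m'_w : w ∈ W_c}`. -/
def Lat (cs : CoxeterSystem M W) {H : Type} [Ring H] [Algebra 𝔸 H]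
    {TL : Type} [Ring TL] [Algebra 𝔸 TL] (h : Hecke cs H) (tl : TLQuot cs H TL h) :
    Submodule Aneg TL :=
  Submodule.span Aneg (Set.range fun w : {w : W // w ∈ Wc cs} => mpr cs (tElt cs h tl) w.1)

/-- The sublattice `v⁻¹L ⊆ L`; for `x, y ∈ L` one has `π(x) = π(y)` in `L/v⁻¹L`
if and only if `x - y ∈ v⁻¹L`. -/
def vinvLat (cs : CoxeterSystem M W) {H : Type} [Ring H] [Algebra 𝔸 H]
    {TL : Type} [Ring TL] [Algebra 𝔸 TL] (h : Hecke cs H) (tl : TLQuot cs H TL h) :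
    Submodule Aneg TL :=
  Submodule.span Aneg (vinv • (Lat cs h tl : Set TL))

/-- Connectivity of the Coxeter graph (in a simply laced graph, adjacency means a bond
of strength 3). -/
def ConnectedCG (M : CoxeterMatrix B) : Prop :=
  ∀ s t : B, Relation.ReflTransGen (fun a b => M a b = 3) s t

/-- The defining relations of the abstract generalized Temperley–Lieb algebra of a
simply laced Coxeter graph, imposed on the free `A`-algebra on the set of nodes. -/
inductive TLRel (M : CoxeterMatrix B) :
    FreeAlgebra 𝔸 B → FreeAlgebra 𝔸 B → Prop
  | sq (s : B) : TLRel M (FreeAlgebra.ι 𝔸 s * FreeAlgebra.ι 𝔸 s)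
      (algebraMap 𝔸 (FreeAlgebra 𝔸 B) qc * FreeAlgebra.ι 𝔸 s)
  | comm (s t : B) : M s t = 2 → TLRel M (FreeAlgebra.ι 𝔸 s * FreeAlgebra.ι 𝔸 t)
      (FreeAlgebra.ι 𝔸 t * FreeAlgebra.ι 𝔸 s)
  | braid (s t : B) : M s t = 3 →
      TLRel M (FreeAlgebra.ι 𝔸 s * FreeAlgebra.ι 𝔸 t * FreeAlgebra.ι 𝔸 s) (FreeAlgebra.ι 𝔸 s)

end TLpaper

/-! Everything is computed in the basis `m'`. Bar-invariance is triangular: if no index in the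
support of `x` lies strictly above `i`, the `i`-th coordinate of `bar x` is the bar of the `i`-th
coordinate of `x`. Hence a nonzero bar-invariant element of `v⁻¹L` would have a maximal
coordinate `f ∈ v⁻¹ℤ[v⁻¹]` with `bar f = f`, which is impossible: this gives uniqueness.
For existence, construct `c_j` by well-founded induction on `j` (lower sets are finite):
`d = m'_j - bar m'_j` is anti-invariant and supported below `j`, and peeling off its maximal
coordinates `f = bar g - g`, `g ∈ v⁻¹ℤ[v⁻¹]`, against the `c_i` already built produces
`y ∈ v⁻¹L` with `bar y - y = d`; then `c_j = m'_j + y`. Being unitriangular in the `m'_i`,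
the `c_i` form an `A⁻`-basis of `L`. -/

open Submodule

namespace Module.Basis

variable {I R M : Type*} [Ring R] [AddCommGroup M] [Module R M] (b : Basis I R M)

theorem sub_repr_smul_mem_span_image_diff {x : M} {s : Set I} (hx : x ∈ span R (b '' s))
    (i : I) : x - b.repr x i • b i ∈ span R (b '' (s \ {i})) := by
  classical
  refine b.mem_span_image.2 fun k hk => ?_
  rw [Finset.mem_coe, Finsupp.mem_support_iff, map_sub, map_smul, repr_self,
    Finsupp.sub_apply, Finsupp.smul_apply, Finsupp.single_apply] at hk
  by_cases hki : i = k
  · subst hki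
    simp at hk
  · rw [if_neg hki, smul_zero, sub_zero] at hk
    exact ⟨b.mem_span_image.1 hx (Finsupp.mem_support_iff.2 hk), Ne.symm hki⟩

variable [PartialOrder I]

theorem repr_apply_eq_single_of_sub_mem_span_Iio {x : M} {i j : I}
    (hx : x - b j ∈ span R (b '' Set.Iio j)) (hij : ¬ i < j) :
    b.repr x i = Finsupp.single j 1 i := by
  have h := Finsupp.notMem_support_iff.1 fun hi => hij (b.mem_span_image.1 hx hi)
  rwa [map_sub, Finsupp.sub_apply, repr_self, sub_eq_zero] at h

theorem linearIndependent_of_sub_mem_span_Iio {c : I → M}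
    (hc : ∀ j, c j - b j ∈ span R (b '' Set.Iio j)) : LinearIndependent R c := by
  classical
  refine linearIndependent_iff.2 fun l hl => ?_
  by_contra hne
  obtain ⟨i, hi⟩ := Finset.exists_maximal (Finsupp.support_nonempty_iff.2 hne)
  have hcoeff : b.repr (Finsupp.linearCombination R c l) i = l i := by
    rw [Finsupp.linearCombination_apply, Finsupp.sum, map_sum, Finsupp.finsetSum_apply,
      Finset.sum_eq_single i]
    · simp [b.repr_apply_eq_single_of_sub_mem_span_Iio (hc i) (lt_irrefl i)]
    · intro k hk hki
      simp [b.repr_apply_eq_single_of_sub_mem_span_Iio (hc k) (hi.not_gt hk), hki]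
    · intro h
      simp [Finsupp.notMem_support_iff.1 h]
  rw [hl, map_zero, Finsupp.zero_apply] at hcoeff
  exact Finsupp.mem_support_iff.1 hi.prop hcoeff.symm

theorem span_range_eq_top_of_sub_mem_span_Iio [WellFoundedLT I] {c : I → M}
    (hc : ∀ j, c j - b j ∈ span R (b '' Set.Iio j)) : span R (Set.range c) = ⊤ := by
  rw [eq_top_iff, ← b.span_eq, span_le]
  rintro _ ⟨j, rfl⟩
  induction j using WellFoundedLT.induction with
  | _ j ih =>
  have hlower : span R (b '' Set.Iio j) ≤ span R (Set.range c) :=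
    span_le.2 (by rintro _ ⟨i, hi, rfl⟩; exact ih i hi)
  simpa using sub_mem (subset_span (Set.mem_range_self j)) (hlower (hc j))

noncomputable def ofUnitriangular [WellFoundedLT I] (c : I → M)
    (hc : ∀ j, c j - b j ∈ span R (b '' Set.Iio j)) : Basis I R M :=
  .mk (b.linearIndependent_of_sub_mem_span_Iio hc) (b.span_range_eq_top_of_sub_mem_span_Iio hc).ge

@[simp]
theorem coe_ofUnitriangular [WellFoundedLT I] (c : I → M)
    (hc : ∀ j, c j - b j ∈ span R (b '' Set.Iio j)) : ⇑(b.ofUnitriangular c hc) = c :=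
  coe_mk _ _

theorem repr_map_apply_eq_of_forall_not_lt {σ : R →+* R} (bar : M →ₛₗ[σ] M)
    (hbar : ∀ j, bar (b j) - b j ∈ span R (b '' Set.Iio j)) {x : M} {i : I}
    (hi : ∀ k ∈ (b.repr x).support, ¬ i < k) :
    b.repr (bar x) i = σ (b.repr x i) := by
  classical
  conv_lhs => rw [← b.linearCombination_repr x]
  rw [Finsupp.linearCombination_apply, Finsupp.sum, map_sum, map_sum, Finsupp.finsetSum_apply,
    Finset.sum_eq_single i]
  · simp [b.repr_apply_eq_single_of_sub_mem_span_Iio (hbar i) (lt_irrefl i)]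
  · intro k hk hki
    simp [b.repr_apply_eq_single_of_sub_mem_span_Iio (hbar k) (hi k hk), hki]
  · intro h
    simp [Finsupp.notMem_support_iff.1 h]

theorem finsum_mem_Iic_smul_sub_mem_span_Iio {j : I} (hfin : (Set.Iic j).Finite) (a : I → R)
    (ha : a j = 1) : ∑ᶠ i ∈ Set.Iic j, a i • b i - b j ∈ span R (b '' Set.Iio j) := by
  classical
  rw [finsum_mem_eq_finite_toFinset_sum _ hfin,
    ← Finset.add_sum_erase _ _ (hfin.mem_toFinset.2 le_rfl), ha, one_smul, add_sub_cancel_left]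
  refine sum_mem fun i hi => smul_mem _ _ (subset_span ⟨i, ?_, rfl⟩)
  obtain ⟨hij, hi⟩ := Finset.mem_erase.1 hi
  exact lt_of_le_of_ne (hfin.mem_toFinset.1 hi) hij

end Module.Basis

theorem wellFoundedLT_of_finite_Iic {I : Type*} [PartialOrder I]
    (hfin : ∀ j : I, (Set.Iic j).Finite) : WellFoundedLT I :=
  ⟨(measure fun j => (hfin j).toFinset.card).wf.mono fun _ _ hij =>
    Finset.card_lt_card (Set.Finite.toFinset_ssubset_toFinset.2 (Set.Iic_ssubset_Iic.2 hij))⟩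

namespace TLpaper

open AddMonoidAlgebra

theorem T_mem_Aneg {n : ℤ} (hn : n ≤ 0) : (T n : 𝔸) ∈ Aneg := by
  have h : (T n : 𝔸) = vinv ^ (-n).toNat := by
    rw [vinv, T_pow]
    congr 1
    omega
  exact h ▸ pow_mem vinv_mem_Aneg _

theorem mem_Aneg_iff {f : 𝔸} : f ∈ Aneg ↔ ∀ n, 0 < n → f.coeff n = 0 := by
  constructor
  · intro hf n hn
    let φ : Polynomial ℤ →+* 𝔸 := (invert : 𝔸 ≃ₐ[ℤ] 𝔸).toRingHom.comp Polynomial.toLaurent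
    have hle : Aneg ≤ φ.range :=
      Subring.closure_le.2 (Set.singleton_subset_iff.2 ⟨.X, by simp [φ, vinv]⟩)
    obtain ⟨p, rfl⟩ := hle hf
    have hp : (Polynomial.toLaurent p).coeff (-n) = 0 := Finsupp.notMem_support_iff.1 fun h => by
      obtain ⟨k, -, hk⟩ := Finset.mem_map.1 ((support_coeff_toLaurent p).le h)
      simp only [Nat.castEmbedding_apply] at hk
      omega
    exact (invert_apply _ n).trans hp
  · intro hf
    rw [← sum_coeff_single f, Finsupp.sum]
    refine sum_mem fun n hn => ?_
    rw [single_eq_C_mul_T, eq_intCast]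
    exact mul_mem (intCast_mem _ _)
      (T_mem_Aneg (not_lt.1 fun h => Finsupp.mem_support_iff.1 hn (hf n h)))

theorem coeff_vv_mul (f : 𝔸) (n : ℤ) : (vv * f).coeff n = f.coeff (n - 1) := by
  rw [vv, T, coeff_single_mul_apply, one_mul, neg_add_eq_sub]

-- `vv * f ∈ Aneg` encodes `f ∈ v⁻¹ℤ[v⁻¹]`.
theorem eq_zero_of_invert_eq_self {f : 𝔸} (hf : vv * f ∈ Aneg) (hinv : invert f = f) :
    f = 0 := by
  have hnonneg : ∀ n, 0 ≤ n → f.coeff n = 0 := fun n hn => by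
    simpa [coeff_vv_mul] using mem_Aneg_iff.1 hf (n + 1) (by omega)
  ext n
  rcases le_or_gt 0 n with hn | hn
  · exact hnonneg n hn
  · rw [← hinv, invert_apply]
    exact hnonneg (-n) (by omega)

theorem exists_invert_sub_eq_of_invert_eq_neg {f : 𝔸} (hf : invert f = -f) :
    ∃ g : 𝔸, vv * g ∈ Aneg ∧ invert g - g = f := by
  have hskew (n : ℤ) : f.coeff (-n) = -f.coeff n := by
    simpa using congrArg (fun p : 𝔸 => p.coeff n) hf
  refine ⟨-ofCoeff (f.coeff.filter (· < 0)), mem_Aneg_iff.2 fun n hn => ?_, ?_⟩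
  · simp [coeff_vv_mul, show ¬n - 1 < 0 by omega]
  · ext n
    rcases lt_trichotomy n 0 with hn | rfl | hn
    · simp [hn, hn.not_gt]
    · simpa using (CharZero.eq_neg_self_iff.1 (hskew 0)).symm
    · simp [hn, hn.not_gt, hskew]

abbrev invertHom : 𝔸 →+* 𝔸 := (invert : 𝔸 ≃ₐ[ℤ] 𝔸).toRingEquiv.toRingHom

@[simp]
theorem invertHom_apply (f : 𝔸) : invertHom f = invert f := rfl

theorem map_smul_eq_invert_smul {M : Type*} [AddCommGroup M] [Module 𝔸 M] (bar : M →+ M)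
    (hsemi : ∀ (n : ℤ) (x : M), bar ((T n : 𝔸) • x) = (T (-n) : 𝔸) • bar x) (f : 𝔸) (x : M) :
    bar (f • x) = invert f • bar x := by
  induction f using LaurentPolynomial.induction_on' with
  | add p q hp hq => rw [add_smul, map_add, hp, hq, map_add, add_smul]
  | C_mul_T n c =>
    have hC (y : M) : (C c : 𝔸) • y = c • y := by rw [eq_intCast C c, Int.cast_smul_eq_zsmul]
    rw [map_mul, invert_C, invert_T, mul_smul, mul_smul, hC, hC, map_zsmul, hsemi]

def semilinearOfMapTSMul {M : Type*} [AddCommGroup M] [Module 𝔸 M] (bar : M →+ M)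
    (hsemi : ∀ (n : ℤ) (x : M), bar ((T n : 𝔸) • x) = (T (-n) : 𝔸) • bar x) :
    M →ₛₗ[invertHom] M where
  toFun := bar
  map_add' := bar.map_add
  map_smul' := map_smul_eq_invert_smul bar hsemi

theorem vv_mul_vinv : vv * vinv = 1 := by
  rw [vv, vinv, ← T_add, add_neg_cancel, T_zero]

instance : Module.IsTorsionFree Aneg 𝔸 :=
  .comap Subtype.val (fun _ hr => by simpa [isRegular_iff_ne_zero] using hr.ne_zero)
    fun _ _ => rfl

section Lattice

variable {I M : Type*} [AddCommGroup M] [Module 𝔸 M] (b : Module.Basis I 𝔸 M)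

def lattice : Submodule Aneg M := span Aneg (Set.range b)

def vinvLattice : Submodule Aneg M := span Aneg (vinv • (lattice b : Set M))

theorem mem_lattice_iff {x : M} : x ∈ lattice b ↔ ∀ i, b.repr x i ∈ Aneg := by
  rw [lattice, b.mem_span_iff_repr_mem Aneg]
  exact forall_congr' fun i => ⟨fun ⟨a, ha⟩ => ha ▸ a.2, fun h => ⟨⟨_, h⟩, rfl⟩⟩

theorem mem_vinvLattice_iff {x : M} : x ∈ vinvLattice b ↔ vv • x ∈ lattice b := by
  constructor
  · intro hx
    induction hx using span_induction with
    | mem x hx =>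
      obtain ⟨y, hy, rfl⟩ := hx
      rwa [smul_smul, vv_mul_vinv, one_smul]
    | zero => simp
    | add x y _ _ hx hy => simpa using add_mem hx hy
    | smul a x _ hx => simpa [smul_comm vv a x] using smul_mem _ a hx
  · intro hx
    have hx' : x = vinv • vv • x := by rw [smul_smul, mul_comm, vv_mul_vinv, one_smul]
    exact hx' ▸ subset_span (Set.smul_mem_smul_set hx)

theorem vinvLattice_le_lattice : vinvLattice b ≤ lattice b :=
  span_le.2 fun _ ⟨_, hy, hxy⟩ => hxy ▸ smul_mem _ ⟨vinv, vinv_mem_Aneg⟩ hy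

theorem smul_mem_vinvLattice {g : 𝔸} (hg : vv * g ∈ Aneg) {x : M} (hx : x ∈ lattice b) :
    g • x ∈ vinvLattice b := by
  rw [mem_vinvLattice_iff, smul_smul]
  exact smul_mem _ ⟨_, hg⟩ hx

theorem vv_mul_repr_mem_Aneg {x : M} (hx : x ∈ vinvLattice b) (i : I) :
    vv * b.repr x i ∈ Aneg := by
  simpa using (mem_lattice_iff b).1 ((mem_vinvLattice_iff b).1 hx) i

theorem exists_basis_lattice [PartialOrder I] [WellFoundedLT I] {c : I → M}
    (hcL : ∀ j, c j ∈ lattice b) (hc : ∀ j, c j - b j ∈ span 𝔸 (b '' Set.Iio j)) :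
    ∃ bas : Module.Basis I Aneg (lattice b), ∀ i, (bas i : M) = c i := by
  let b₀ : Module.Basis I Aneg (lattice b) := b.restrictScalars Aneg
  have hsupp (y : lattice b) : (b₀.repr y).support = (b.repr y).support := by
    ext i
    rw [Finsupp.mem_support_iff, Finsupp.mem_support_iff,
      ← b.restrictScalars_repr_apply Aneg y i]
    exact (map_ne_zero_iff _ (FaithfulSMul.algebraMap_injective Aneg 𝔸)).symm
  let c₀ : I → lattice b := fun j => ⟨c j, hcL j⟩
  have hc₀ (j : I) : c₀ j - b₀ j ∈ span Aneg (b₀ '' Set.Iio j) := by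
    have hcoe : ((c₀ j - b₀ j : lattice b) : M) = c j - b j :=
      congrArg (c j - ·) (b.restrictScalars_apply Aneg j)
    rw [b₀.mem_span_image, hsupp, hcoe]
    exact b.mem_span_image.1 (hc j)
  exact ⟨b₀.ofUnitriangular c₀ hc₀, fun i => by simp [c₀]⟩

end Lattice

section Canonical

variable {I M : Type*} [PartialOrder I] [AddCommGroup M] [Module 𝔸 M]
  (b : Module.Basis I 𝔸 M) (bar : M →ₛₗ[invertHom] M)

structure IsCanonical (j : I) (x : M) : Prop where
  bar_eq : bar x = x
  sub_mem_vinvLattice : x - b j ∈ vinvLattice b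
  sub_mem_span_Iio : x - b j ∈ span 𝔸 (b '' Set.Iio j)

variable {b bar}

theorem IsCanonical.mem_lattice {j : I} {x : M} (h : IsCanonical b bar j x) : x ∈ lattice b := by
  have h' : b j + (x - b j) ∈ lattice b :=
    add_mem (subset_span (Set.mem_range_self j)) (vinvLattice_le_lattice b h.sub_mem_vinvLattice)
  simpa using h'

theorem IsCanonical.mem_span_image {j : I} {x : M} (h : IsCanonical b bar j x) {s : Set I}
    (hs : Set.Iic j ⊆ s) : x ∈ span 𝔸 (b '' s) := by
  have h' : b j + (x - b j) ∈ span 𝔸 (b '' s) := add_mem (subset_span ⟨j, hs le_rfl, rfl⟩)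
    (span_mono (Set.image_mono (Set.Iio_subset_Iic_self.trans hs)) h.sub_mem_span_Iio)
  simpa using h'

theorem eq_zero_of_mem_vinvLattice_of_bar_eq
    (hbar : ∀ j, bar (b j) - b j ∈ span 𝔸 (b '' Set.Iio j)) {x : M}
    (hx : x ∈ vinvLattice b) (hbx : bar x = x) : x = 0 := by
  by_contra hne
  obtain ⟨i, hi⟩ :=
    Finset.exists_maximal (Finsupp.support_nonempty_iff.2 (b.repr.map_ne_zero_iff.2 hne))
  have hlead := b.repr_map_apply_eq_of_forall_not_lt bar hbar fun k hk => hi.not_gt hk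
  rw [hbx] at hlead
  exact Finsupp.mem_support_iff.1 hi.prop
    (eq_zero_of_invert_eq_self (vv_mul_repr_mem_Aneg b hx i) hlead.symm)

theorem eq_of_bar_eq_of_sub_mem_vinvLattice
    (hbar : ∀ j, bar (b j) - b j ∈ span 𝔸 (b '' Set.Iio j)) {j : I} {x y : M}
    (hx : bar x = x) (hy : bar y = y) (hxV : x - b j ∈ vinvLattice b)
    (hyV : y - b j ∈ vinvLattice b) : x = y := by
  refine sub_eq_zero.1 (eq_zero_of_mem_vinvLattice_of_bar_eq hbar ?_ (by rw [map_sub, hx, hy]))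
  simpa using sub_mem hxV hyV

theorem exists_mem_vinvLattice_bar_sub_eq
    (hbar : ∀ j, bar (b j) - b j ∈ span 𝔸 (b '' Set.Iio j)) (c : I → M) (s : Finset I)
    (hs : IsLowerSet (s : Set I)) (hc : ∀ i ∈ s, IsCanonical b bar i (c i)) {d : M}
    (hd : bar d = -d) (hds : d ∈ span 𝔸 (b '' s)) :
    ∃ y ∈ vinvLattice b, y ∈ span 𝔸 (b '' s) ∧ bar y - y = d := by
  classical
  induction s using Finset.strongInduction generalizing d with
  | H s ih =>
  rcases s.eq_empty_or_nonempty with rfl | hne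
  · obtain rfl : d = 0 := by simpa using hds
    exact ⟨0, zero_mem _, zero_mem _, by rw [map_zero, sub_zero]⟩
  -- The coordinate `f` of `d` at a maximal `i ∈ s` is anti-invariant; writing `f = bar g - g`
  -- and passing to `d - f • c i` removes `i` from `s`.
  obtain ⟨i, hi⟩ := s.exists_maximal hne
  have hci := hc i hi.prop
  set f := b.repr d i
  have hf : invert f = -f := by
    have hlead := b.repr_map_apply_eq_of_forall_not_lt bar hbar (x := d) (i := i)
      fun k hk => hi.not_gt (b.mem_span_image.1 hds hk)
    rwa [hd, map_neg, Finsupp.neg_apply, eq_comm] at hlead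
  obtain ⟨g, hg, hgf⟩ := exists_invert_sub_eq_of_invert_eq_neg hf
  have herase : ((s.erase i : Finset I) : Set I) = (s : Set I) \ {i} := Finset.coe_erase i s
  have hIio : Set.Iio i ⊆ (s : Set I) \ {i} := fun k hk => ⟨hs hk.le hi.prop, hk.ne⟩
  have hlower : IsLowerSet ((s : Set I) \ {i}) :=
    hs.erase fun k hk hik => (hi.eq_of_le hk hik).symm
  have hsub : ((s.erase i : Finset I) : Set I) ⊆ s := herase ▸ Set.sdiff_subset
  have hd' : d - f • c i ∈ span 𝔸 (b '' (s.erase i : Finset I)) := by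
    have h : d - f • c i = (d - f • b i) - f • (c i - b i) := by rw [smul_sub]; abel
    rw [h, herase]
    exact sub_mem (b.sub_repr_smul_mem_span_image_diff hds i)
      (smul_mem _ f (span_mono (Set.image_mono hIio) hci.sub_mem_span_Iio))
  obtain ⟨y, hyV, hys, hy⟩ := ih (s.erase i) (Finset.erase_ssubset hi.prop) (herase ▸ hlower)
    (fun k hk => hc k (Finset.mem_of_mem_erase hk)) (d := d - f • c i)
    (by rw [map_sub, map_smulₛₗ, hd, hci.bar_eq, invertHom_apply, hf, neg_smul]; abel) hd'
  refine ⟨y + g • c i, add_mem hyV (smul_mem_vinvLattice b hg hci.mem_lattice), ?_, ?_⟩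
  · exact add_mem (span_mono (Set.image_mono hsub) hys) (smul_mem _ g (hci.mem_span_image fun k hk => hs hk hi.prop))
  · rw [map_add, map_smulₛₗ, hci.bar_eq]
    simp only [invertHom_apply]
    linear_combination (norm := module) hy + hgf • c i

theorem exists_isCanonical (hbar : ∀ j, bar (b j) - b j ∈ span 𝔸 (b '' Set.Iio j))
    (hinv : Function.Involutive bar) (hfin : ∀ j : I, (Set.Iic j).Finite) (j : I) :
    ∃ x, IsCanonical b bar j x := by
  have := wellFoundedLT_of_finite_Iic hfin
  induction j using WellFoundedLT.induction with
  | _ j ih =>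
  choose! c hc using ih
  have hIio : (Set.Iio j).Finite := (hfin j).subset Set.Iio_subset_Iic_self
  obtain ⟨y, hyV, hys, hy⟩ := exists_mem_vinvLattice_bar_sub_eq hbar c hIio.toFinset
    (by simpa using isLowerSet_Iio j) (fun i hi => hc i (by simpa using hi))
    (d := b j - bar (b j)) (by rw [map_sub, hinv, neg_sub])
    (by simpa using neg_mem (hbar j))
  refine ⟨b j + y, ?_, by simpa using hyV, by simpa using hys⟩
  rw [map_add, sub_eq_iff_eq_add.1 hy]
  abel

end Canonical

/-- Theorem 2.2 (Du): existence and uniqueness of the IC basis. -/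
theorem du_IC_basis {I : Type} [PartialOrder I]
    (hfin : ∀ j : I, {i : I | i ≤ j}.Finite)
    {M : Type} [AddCommGroup M] [Module 𝔸 M] (m : Module.Basis I 𝔸 M)
    (bar : M → M)
    (hadd : ∀ x y : M, bar (x + y) = bar x + bar y)
    (hsemi : ∀ (n : ℤ) (x : M),
      bar ((LaurentPolynomial.T n : 𝔸) • x) = (LaurentPolynomial.T (-n) : 𝔸) • bar x)
    (hinv : ∀ x : M, bar (bar x) = x)
    (r : I → ℤ) (m' : I → M)
    (hm' : ∀ i : I, m' i = (LaurentPolynomial.T (r i) : 𝔸) • m i)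
    (a : I → I → 𝔸)
    (ha : ∀ j : I, bar (m' j) = ∑ᶠ i ∈ {i : I | i ≤ j}, a i j • m' i)
    (haa : ∀ j : I, a j j = 1) :
    ∃! c : I → M,
      (∀ i, c i ∈ Submodule.span Aneg (Set.range m')) ∧
      (∃ bas : Module.Basis I Aneg (Submodule.span Aneg (Set.range m')),
        ∀ i, (bas i : M) = c i) ∧
      (∀ i, bar (c i) = c i) ∧
      (∀ i, c i - m' i ∈
        Submodule.span Aneg (vinv • (Submodule.span Aneg (Set.range m') : Set M))) := by
  obtain ⟨b, rfl⟩ : ∃ b : Module.Basis I 𝔸 M, ⇑b = m' :=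
    ⟨m.unitsSMul fun i => (isUnit_T (r i)).unit,
      funext fun i => by simp [hm', Module.Basis.unitsSMul_apply, Units.smul_def]⟩
  let β : M →ₛₗ[invertHom] M := semilinearOfMapTSMul (AddMonoidHom.mk' bar hadd) hsemi
  have hβ (j : I) : β (b j) - b j ∈ span 𝔸 (b '' Set.Iio j) := by
    rw [show β (b j) = bar (b j) from rfl, ha j]
    exact b.finsum_mem_Iic_smul_sub_mem_span_Iio (hfin j) (a · j) (haa j)
  choose c hc using exists_isCanonical hβ hinv hfin
  have := wellFoundedLT_of_finite_Iic hfin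
  refine ⟨c, ⟨fun i => (hc i).mem_lattice, exists_basis_lattice b (fun i => (hc i).mem_lattice)
    (fun i => (hc i).sub_mem_span_Iio), fun i => (hc i).bar_eq,
    fun i => (hc i).sub_mem_vinvLattice⟩, ?_⟩
  rintro c' ⟨-, -, hc'bar, hc'⟩
  funext i
  exact eq_of_bar_eq_of_sub_mem_vinvLattice hβ (hc'bar i) (hc i).bar_eq (hc' i)
    (hc i).sub_mem_vinvLattice

end TLpaper
end
end

section
/- If the Coxeter graph X is simply laced and w ∈ W_c, then the product b_{s₁} b_{s₂} ⋯ b_{s_r} ∈ TL(X) is the same for every reduced expression w = s₁ s₂ ⋯ s_r of w; that is, the element b_w is well defined. -/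
/-! Common setup: Laurent polynomials, Coxeter combinatorics, the Hecke algebra and
its generalized Temperley–Lieb quotient, axiomatized via structures. -/

noncomputable section

open LaurentPolynomial Pointwise

/-!
Induction on `ℓ(w)`. Two reduced words of `w` begin with left descents `s` and `t` of `w`, and
their tails are reduced words of the shorter non-complex elements `sw` and `tw`. If `s = t`, the
induction hypothesis applies directly. If `st = ts`, then `t` is also a left descent of `sw`, so
both words can be routed through one reduced word of `tsw`, after which they differ only by
`b_s b_t = b_t b_s`. If `s` and `t` are joined by a bond, then `sts` is a length-additive left
factor of `w`, so `w` would be complex.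

The descent combinatorics is read off the Hecke algebra: if `t` is a left descent of `w`, the
coefficient of `T_w` in `T_t T_w` is `q - 1 ≠ 0`, whereas expanding the same product through the
quadratic and braid relations shows that this coefficient vanishes unless the claimed descents
exist.
-/

namespace TLpaper

open CoxeterSystem

theorem qpar_sub_one_ne_zero : (qpar - 1 : 𝔸) ≠ 0 := by
  intro h
  have := congr_arg (fun p : 𝔸 => p.coeff 2) (sub_eq_zero.mp h)
  simp [qpar, ← LaurentPolynomial.T_zero] at this

section Coxeter

variable {B W : Type} [Group W] {M : CoxeterMatrix B} (cs : CoxeterSystem M W)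

theorem length_simple_mul_simple {i j : B} (hij : cs.simple i ≠ cs.simple j) :
    cs.length (cs.simple i * cs.simple j) = 2 := by
  rcases cs.length_simple_mul (cs.simple j) i with h | h
  · simpa using h
  · refine absurd ?_ hij
    rw [cs.length_simple, Nat.add_eq_right, cs.length_eq_zero_iff, mul_eq_one_iff_eq_inv,
      cs.inv_simple] at h
    exact h

theorem simple_mul_simple_comm_of_eq_two {i j : B} (h2 : M i j = 2) :
    cs.simple i * cs.simple j = cs.simple j * cs.simple i := by
  have := cs.simple_mul_simple_pow i j
  rw [h2, pow_two, mul_eq_one_iff_eq_inv, mul_inv_rev, cs.inv_simple, cs.inv_simple] at this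
  exact this

theorem simple_braid_of_eq_three {i j : B} (h3 : M i j = 3) :
    cs.simple i * cs.simple j * cs.simple i = cs.simple j * cs.simple i * cs.simple j := by
  have h1 : (cs.simple i * cs.simple j * cs.simple i) * (cs.simple j * cs.simple i * cs.simple j)
      = 1 := by
    rw [← cs.simple_mul_simple_pow i j, h3]
    simp [pow_succ, mul_assoc]
  simpa [mul_assoc, cs.inv_simple] using eq_inv_of_mul_eq_one_left h1

theorem simple_mul_simple_ne_of_braid {i j : B} (hij : cs.simple i ≠ cs.simple j)
    (hbr : cs.simple i * cs.simple j * cs.simple i = cs.simple j * cs.simple i * cs.simple j) :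
    cs.simple i * cs.simple j ≠ cs.simple j * cs.simple i := by
  intro hc
  apply hij
  have hs : cs.simple i * cs.simple j * cs.simple i = cs.simple j := by
    rw [hc, mul_assoc, cs.simple_mul_simple_self, mul_one]
  have ht : cs.simple j * cs.simple i * cs.simple j = cs.simple i := by
    rw [← hc, mul_assoc, cs.simple_mul_simple_self, mul_one]
  rw [← ht, ← hbr, hs]

theorem isLeftDescent_wordProd_cons {i : B} {u : List B} (hr : cs.IsReduced (i :: u)) :
    cs.IsLeftDescent (cs.wordProd (i :: u)) i := by
  have := cs.length_wordProd_le u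
  rw [IsLeftDescent, hr.eq, wordProd_cons, cs.simple_mul_simple_cancel_left, List.length_cons]
  omega

theorem isReduced_cons_of_isLeftDescent {i : B} {r : List B} {x : W} (hr : cs.IsReduced r)
    (hx : cs.IsLeftDescent x i) (hrx : cs.wordProd r = cs.simple i * x) :
    cs.IsReduced (i :: r) ∧ cs.wordProd (i :: r) = x := by
  have hπ : cs.wordProd (i :: r) = x := by
    rw [wordProd_cons, hrx, cs.simple_mul_simple_cancel_left]
  refine ⟨?_, hπ⟩
  have := cs.isLeftDescent_iff.mp hx
  rw [CoxeterSystem.IsReduced, hπ, List.length_cons, ← hr.eq, hrx]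
  omega

theorem isComplex_of_eq_wD_mul {s t : B} (hst : AdjFin M s t) {w x : W} (hw : w = wD cs s t * x)
    (hlen : cs.length w = M s t + cs.length x) : IsComplex cs w := by
  refine ⟨s, t, 1, x, hst, by rw [hw, one_mul], ?_⟩
  have h₁ : cs.length (wD cs s t) ≤ M s t := by
    simpa [wD] using cs.length_wordProd_le (alternatingWord s t (M s t))
  have h₂ := hw ▸ cs.length_mul_le (wD cs s t) x
  rw [cs.length_one]
  omega

theorem mem_Wc_of_length_mul {x y : W} (hxy : x * y ∈ Wc cs)
    (hlen : cs.length (x * y) = cs.length x + cs.length y) : y ∈ Wc cs := by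
  rintro ⟨s, t, x₁, x₂, hst, rfl, hl⟩
  refine hxy ⟨s, t, x * x₁, x₂, hst, by simp only [mul_assoc], ?_⟩
  have h₁ := cs.length_mul_le x x₁
  have h₂ := cs.length_mul_le (x * x₁) (wD cs s t * x₂)
  have h₃ := cs.length_mul_le (wD cs s t) x₂
  simp only [mul_assoc] at hlen hl h₂ ⊢
  omega

theorem simple_mul_mem_Wc {w : W} {i : B} (hw : w ∈ Wc cs) (hi : cs.IsLeftDescent w i) :
    cs.simple i * w ∈ Wc cs := by
  refine mem_Wc_of_length_mul cs (x := cs.simple i) (by rwa [cs.simple_mul_simple_cancel_left]) ?_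
  rw [cs.simple_mul_simple_cancel_left, cs.length_simple]
  exact (cs.isLeftDescent_iff.mp hi).symm.trans (add_comm _ _)

end Coxeter

section Hecke

variable {B W : Type} [Group W] {M : CoxeterMatrix B} {cs : CoxeterSystem M W}
  {H : Type} [Ring H] [Algebra 𝔸 H]

theorem Hecke.TT_simple_mul_of_not_isLeftDescent (h : Hecke cs H) {i : B} {x : W}
    (hx : ¬ cs.IsLeftDescent x i) :
    h.TT (cs.simple i) * h.TT x = h.TT (cs.simple i * x) :=
  h.TT_mul_gt i x (by rw [cs.not_isLeftDescent_iff] at hx; omega)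

theorem Hecke.TT_eq_TT_simple_mul_of_isLeftDescent (h : Hecke cs H) {i : B} {w : W}
    (hw : cs.IsLeftDescent w i) :
    h.TT w = h.TT (cs.simple i) * h.TT (cs.simple i * w) := by
  rw [h.TT_simple_mul_of_not_isLeftDescent (cs.isLeftDescent_iff_not_isLeftDescent_mul.mp hw),
    cs.simple_mul_simple_cancel_left]

theorem Hecke.TT_simple_mul_TT_simple (h : Hecke cs H) {i j : B}
    (hij : cs.simple i ≠ cs.simple j) :
    h.TT (cs.simple i) * h.TT (cs.simple j) = h.TT (cs.simple i * cs.simple j) :=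
  h.TT_simple_mul_of_not_isLeftDescent (by
    rw [cs.not_isLeftDescent_iff, length_simple_mul_simple cs hij, cs.length_simple])

theorem Hecke.repr_TT_of_ne (h : Hecke cs H) {x y : W} (hxy : x ≠ y) :
    h.TT.repr (h.TT x) y = 0 := by
  rw [h.TT.repr_self, Finsupp.single_eq_of_ne' hxy]

theorem Hecke.repr_TT_simple_mul_of_isLeftDescent (h : Hecke cs H) {i : B} {w : W}
    (hw : cs.IsLeftDescent w i) (z : H) :
    h.TT.repr (h.TT (cs.simple i) * z) w =
      (qpar - 1) * h.TT.repr z w + h.TT.repr z (cs.simple i * w) := by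
  classical
  refine LinearMap.congr_fun (h.TT.ext (f₁ := h.TT.coord w ∘ₗ LinearMap.mulLeft 𝔸 _)
    (f₂ := (qpar - 1) • h.TT.coord w + h.TT.coord (cs.simple i * w)) fun x => ?_) z
  have hsw : (cs.simple i * x = w) ↔ (x = cs.simple i * w) := by
    constructor <;> rintro rfl <;> simp
  by_cases hx : cs.IsLeftDescent x i
  · have : cs.simple i * x ≠ w := by
      rintro rfl
      exact cs.isLeftDescent_iff_not_isLeftDescent_mul.mp hx hw
    simp [h.TT_mul_lt i x hx, Finsupp.single_apply, this, hsw.not.mp this]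
    split_ifs <;> ring
  · have : x ≠ w := by rintro rfl; exact hx hw
    simp [h.TT_simple_mul_of_not_isLeftDescent hx, Finsupp.single_apply, this, hsw]

theorem Hecke.repr_TT_simple_mul_of_not_isLeftDescent (h : Hecke cs H) {i : B} {w : W}
    (hw : ¬ cs.IsLeftDescent w i) (z : H) :
    h.TT.repr (h.TT (cs.simple i) * z) w = qpar * h.TT.repr z (cs.simple i * w) := by
  classical
  refine LinearMap.congr_fun (h.TT.ext (f₁ := h.TT.coord w ∘ₗ LinearMap.mulLeft 𝔸 _)
    (f₂ := qpar • h.TT.coord (cs.simple i * w)) fun x => ?_) z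
  have hsw : (cs.simple i * x = w) ↔ (x = cs.simple i * w) := by
    constructor <;> rintro rfl <;> simp
  by_cases hx : cs.IsLeftDescent x i
  · have : x ≠ w := by rintro rfl; exact hw hx
    simp [h.TT_mul_lt i x hx, Finsupp.single_apply, this, hsw]
  · have : cs.simple i * x ≠ w := by
      rintro rfl
      exact hw (cs.isLeftDescent_iff_not_isLeftDescent_mul.mpr (by simpa using hx))
    simp [h.TT_simple_mul_of_not_isLeftDescent hx, this, hsw.not.mp this]

theorem Hecke.repr_TT_simple_mul_eq_zero (h : Hecke cs H) {i : B} {w : W} {z : H}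
    (h₁ : h.TT.repr z w = 0) (h₂ : h.TT.repr z (cs.simple i * w) = 0) :
    h.TT.repr (h.TT (cs.simple i) * z) w = 0 := by
  by_cases hw : cs.IsLeftDescent w i
  · simp [h.repr_TT_simple_mul_of_isLeftDescent hw, h₁, h₂]
  · simp [h.repr_TT_simple_mul_of_not_isLeftDescent hw, h₂]

theorem Hecke.repr_TT_simple_mul_TT_self (h : Hecke cs H) {i : B} {w : W}
    (hw : cs.IsLeftDescent w i) : h.TT.repr (h.TT (cs.simple i) * h.TT w) w = qpar - 1 := by
  have hne : w ≠ cs.simple i * w := ne_of_apply_ne cs.length hw.ne'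
  rw [h.repr_TT_simple_mul_of_isLeftDescent hw, h.repr_TT_of_ne hne, h.TT.repr_self,
    Finsupp.single_eq_same, mul_one, add_zero]

theorem Hecke.length_simple_mul_simple_mul_simple (h : Hecke cs H) {i j : B} (h3 : M i j = 3)
    (hij : cs.simple i ≠ cs.simple j) :
    cs.length (cs.simple i * cs.simple j * cs.simple i) = 3 := by
  have hts := length_simple_mul_simple cs hij.symm
  have hst := length_simple_mul_simple cs hij
  rw [mul_assoc]
  rcases cs.length_simple_mul (cs.simple j * cs.simple i) i with hup | hdown
  · omega
  exfalso
  have hd : cs.IsLeftDescent (cs.simple j * cs.simple i) i := cs.isLeftDescent_iff.mpr hdown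
  obtain ⟨k, hk⟩ := cs.length_eq_one_iff.mp (by omega :
    cs.length (cs.simple i * (cs.simple j * cs.simple i)) = 1)
  have hki : cs.simple k * cs.simple i = cs.simple i * cs.simple j := by
    rw [← hk, mul_assoc, mul_assoc, cs.simple_mul_simple_self, mul_one]
  have hki' : cs.simple k ≠ cs.simple i := fun e => by
    rw [e, cs.simple_mul_simple_self] at hki
    rw [← hki, cs.length_one] at hst
    omega
  -- `T_i T_j = T_k T_i`, so the quadratic relation for `T_i` expands `T_i T_j T_i` a second way
  have e : h.TT (cs.simple i) * h.TT (cs.simple j * cs.simple i) =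
      qpar • h.TT (cs.simple k) + (qpar - 1) • h.TT (cs.simple i * cs.simple j) := by
    rw [← h.TT_simple_mul_TT_simple hij.symm, ← mul_assoc, h.TT_simple_mul_TT_simple hij,
      ← hki, ← h.TT_simple_mul_TT_simple hki', mul_assoc, h.TT_mul_lt i _ (by simp),
      cs.simple_mul_simple_self, h.TT_one, mul_add, mul_smul_comm, mul_smul_comm, mul_one]
  have n₁ : cs.simple k ≠ cs.simple j * cs.simple i :=
    ne_of_apply_ne cs.length (by rw [cs.length_simple]; omega)
  have n₂ := simple_mul_simple_ne_of_braid cs hij (simple_braid_of_eq_three cs h3)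
  have lhs := h.repr_TT_simple_mul_TT_self hd
  have rhs : h.TT.repr (qpar • h.TT (cs.simple k) +
      (qpar - 1) • h.TT (cs.simple i * cs.simple j)) (cs.simple j * cs.simple i) = 0 := by
    rw [map_add, map_smul, map_smul, Finsupp.add_apply, Finsupp.smul_apply, Finsupp.smul_apply,
      h.repr_TT_of_ne n₁, h.repr_TT_of_ne n₂, smul_zero, smul_zero, add_zero]
  exact qpar_sub_one_ne_zero (lhs.symm.trans (e ▸ rhs))

theorem Hecke.TT_braid (h : Hecke cs H) {i j : B} (h3 : M i j = 3)
    (hij : cs.simple i ≠ cs.simple j) :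
    h.TT (cs.simple i) * h.TT (cs.simple j) * h.TT (cs.simple i) =
      h.TT (cs.simple j) * h.TT (cs.simple i) * h.TT (cs.simple j) := by
  have hbr := simple_braid_of_eq_three cs h3
  have hlen := h.length_simple_mul_simple_mul_simple h3 hij
  have hlen' : cs.length (cs.simple j * cs.simple i * cs.simple j) = 3 := hbr ▸ hlen
  rw [mul_assoc, mul_assoc, h.TT_simple_mul_TT_simple hij, h.TT_simple_mul_TT_simple hij.symm,
    h.TT_simple_mul_of_not_isLeftDescent, h.TT_simple_mul_of_not_isLeftDescent, ← mul_assoc,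
    ← mul_assoc, hbr]
  · rw [cs.not_isLeftDescent_iff, ← mul_assoc, hlen', length_simple_mul_simple cs hij]
  · rw [cs.not_isLeftDescent_iff, ← mul_assoc, hlen, length_simple_mul_simple cs hij.symm]

theorem Hecke.isLeftDescent_simple_mul_of_eq_two (h : Hecke cs H) {i j : B} (h2 : M i j = 2)
    (hij : cs.simple i ≠ cs.simple j) {w : W} (hi : cs.IsLeftDescent w i)
    (hj : cs.IsLeftDescent w j) : cs.IsLeftDescent (cs.simple i * w) j := by
  by_contra hn
  have e : h.TT (cs.simple j) * h.TT w =
      h.TT (cs.simple i) * h.TT (cs.simple j * (cs.simple i * w)) := by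
    rw [h.TT_eq_TT_simple_mul_of_isLeftDescent hi, ← mul_assoc,
      h.TT_simple_mul_TT_simple hij.symm, ← simple_mul_simple_comm_of_eq_two cs h2,
      ← h.TT_simple_mul_TT_simple hij, mul_assoc, h.TT_simple_mul_of_not_isLeftDescent hn]
  have hn' := cs.not_isLeftDescent_iff.mp hn
  have hts : cs.simple j * cs.simple i ≠ 1 := fun e => by
    simpa [e] using length_simple_mul_simple cs hij.symm
  have n₁ : cs.simple j * (cs.simple i * w) ≠ w := by
    simpa [mul_assoc] using (mul_left_injective w).ne hts
  have n₂ : cs.simple j * (cs.simple i * w) ≠ cs.simple i * w :=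
    ne_of_apply_ne cs.length (by omega)
  have lhs := h.repr_TT_simple_mul_TT_self hj
  have rhs : h.TT.repr (h.TT (cs.simple i) * h.TT (cs.simple j * (cs.simple i * w))) w = 0 :=
    h.repr_TT_simple_mul_eq_zero (h.repr_TT_of_ne n₁) (h.repr_TT_of_ne n₂)
  exact qpar_sub_one_ne_zero (lhs.symm.trans (e ▸ rhs))

theorem Hecke.isLeftDescent_simple_mul_of_eq_three (h : Hecke cs H) {i j : B} (h3 : M i j = 3)
    (hij : cs.simple i ≠ cs.simple j) {w : W} (hi : cs.IsLeftDescent w i)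
    (hj : cs.IsLeftDescent w j) : cs.IsLeftDescent (cs.simple i * w) j := by
  by_contra hn
  have e : h.TT (cs.simple i) * (h.TT (cs.simple j) * h.TT w) =
      h.TT (cs.simple j) * (h.TT (cs.simple i) * h.TT (cs.simple j * (cs.simple i * w))) := by
    rw [h.TT_eq_TT_simple_mul_of_isLeftDescent hi, ← mul_assoc, ← mul_assoc, h.TT_braid h3 hij,
      mul_assoc, mul_assoc, h.TT_simple_mul_of_not_isLeftDescent hn]
  have hi' := cs.isLeftDescent_iff.mp hi
  have hj' := cs.isLeftDescent_iff.mp hj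
  have hn' := cs.not_isLeftDescent_iff.mp hn
  have hne : ∀ {a b : W}, a ≠ b → a * w ≠ b * w := fun hab => (mul_left_injective w).ne hab
  have hts : cs.simple j * cs.simple i ≠ 1 := fun e => by
    simpa [e] using length_simple_mul_simple cs hij.symm
  have hcomm := simple_mul_simple_ne_of_braid cs hij.symm (simple_braid_of_eq_three cs h3).symm
  have n₁ : w ≠ cs.simple i * w := ne_of_apply_ne cs.length (by omega)
  have n₂ : w ≠ cs.simple j * w := ne_of_apply_ne cs.length (by omega)
  have n₃ : cs.simple j * (cs.simple i * w) ≠ w := by simpa [mul_assoc] using hne hts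
  have n₄ : cs.simple j * (cs.simple i * w) ≠ cs.simple i * w :=
    ne_of_apply_ne cs.length (by omega)
  have n₅ : cs.simple j * (cs.simple i * w) ≠ cs.simple j * w :=
    ne_of_apply_ne cs.length (by omega)
  have n₆ : cs.simple j * (cs.simple i * w) ≠ cs.simple i * (cs.simple j * w) := by
    simpa [mul_assoc] using hne hcomm
  have lhs : h.TT.repr (h.TT (cs.simple i) * (h.TT (cs.simple j) * h.TT w)) w =
      (qpar - 1) ^ 2 := by
    rw [h.repr_TT_simple_mul_of_isLeftDescent hi, h.repr_TT_simple_mul_of_isLeftDescent hj,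
      h.repr_TT_simple_mul_eq_zero (h.repr_TT_of_ne n₁) (h.repr_TT_of_ne n₃.symm),
      h.repr_TT_of_ne n₂, h.TT.repr_self, Finsupp.single_eq_same]
    ring
  have rhs : h.TT.repr (h.TT (cs.simple j) *
      (h.TT (cs.simple i) * h.TT (cs.simple j * (cs.simple i * w)))) w = 0 :=
    h.repr_TT_simple_mul_eq_zero
      (h.repr_TT_simple_mul_eq_zero (h.repr_TT_of_ne n₃) (h.repr_TT_of_ne n₄))
      (h.repr_TT_simple_mul_eq_zero (h.repr_TT_of_ne n₅) (h.repr_TT_of_ne n₆))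
  exact pow_ne_zero 2 qpar_sub_one_ne_zero (lhs.symm.trans (e ▸ rhs))

theorem Hecke.isLeftDescent_simple_mul_simple_mul_of_eq_three (h : Hecke cs H) {i j : B}
    (h3 : M i j = 3) (hij : cs.simple i ≠ cs.simple j) {w : W} (hi : cs.IsLeftDescent w i)
    (hj : cs.IsLeftDescent w j) : cs.IsLeftDescent (cs.simple j * (cs.simple i * w)) i := by
  by_contra hn
  have hsw := h.isLeftDescent_simple_mul_of_eq_three h3 hij hi hj
  have e : h.TT (cs.simple j) * h.TT w = h.TT (cs.simple i) * (h.TT (cs.simple j) *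
      h.TT (cs.simple i * (cs.simple j * (cs.simple i * w)))) := by
    rw [h.TT_eq_TT_simple_mul_of_isLeftDescent hi, h.TT_eq_TT_simple_mul_of_isLeftDescent hsw,
      ← mul_assoc, ← mul_assoc, ← h.TT_braid h3 hij, mul_assoc, mul_assoc,
      h.TT_simple_mul_of_not_isLeftDescent hn]
  have hi' := cs.isLeftDescent_iff.mp hi
  have hsw' := cs.isLeftDescent_iff.mp hsw
  have hn' := cs.not_isLeftDescent_iff.mp hn
  have hne : ∀ {a b : W}, a ≠ b → a * w ≠ b * w := fun hab => (mul_left_injective w).ne hab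
  have hlen := h.length_simple_mul_simple_mul_simple h3 hij
  have n₁ : cs.simple i * (cs.simple j * (cs.simple i * w)) ≠ w :=
    ne_of_apply_ne cs.length (by omega)
  have n₂ : cs.simple i * (cs.simple j * (cs.simple i * w)) ≠ cs.simple j * w := by
    have : cs.simple i * cs.simple j * cs.simple i ≠ cs.simple j :=
      ne_of_apply_ne cs.length (by rw [hlen, cs.length_simple]; decide)
    simpa [mul_assoc] using hne this
  have n₃ : cs.simple i * (cs.simple j * (cs.simple i * w)) ≠ cs.simple i * w := by
    have : cs.simple i * cs.simple j * cs.simple i ≠ cs.simple i :=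
      ne_of_apply_ne cs.length (by rw [hlen, cs.length_simple]; decide)
    simpa [mul_assoc] using hne this
  have n₄ : cs.simple i * (cs.simple j * (cs.simple i * w)) ≠ cs.simple j * (cs.simple i * w) :=
    ne_of_apply_ne cs.length (by omega)
  have lhs := h.repr_TT_simple_mul_TT_self hj
  have rhs : h.TT.repr (h.TT (cs.simple i) * (h.TT (cs.simple j) *
      h.TT (cs.simple i * (cs.simple j * (cs.simple i * w))))) w = 0 :=
    h.repr_TT_simple_mul_eq_zero
      (h.repr_TT_simple_mul_eq_zero (h.repr_TT_of_ne n₁) (h.repr_TT_of_ne n₂))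
      (h.repr_TT_simple_mul_eq_zero (h.repr_TT_of_ne n₃) (h.repr_TT_of_ne n₄))
  exact qpar_sub_one_ne_zero (lhs.symm.trans (e ▸ rhs))

theorem Hecke.isComplex_of_isLeftDescent_of_eq_three (h : Hecke cs H) {i j : B} (h3 : M i j = 3)
    (hij : cs.simple i ≠ cs.simple j) {w : W} (hi : cs.IsLeftDescent w i)
    (hj : cs.IsLeftDescent w j) : IsComplex cs w := by
  have h3' : M j i = 3 := by rw [M.symmetric]; exact h3
  have hwD : wD cs j i = cs.simple i * cs.simple j * cs.simple i := by
    simp [wD, h3', alternatingWord, wordProd_cons, mul_assoc]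
  refine isComplex_of_eq_wD_mul cs (s := j) (t := i) (by simp [AdjFin, h3'])
    (x := cs.simple i * (cs.simple j * (cs.simple i * w))) (by simp [hwD, mul_assoc]) ?_
  have h₁ := cs.isLeftDescent_iff.mp hi
  have h₂ := cs.isLeftDescent_iff.mp (h.isLeftDescent_simple_mul_of_eq_three h3 hij hi hj)
  have h₃ := cs.isLeftDescent_iff.mp
    (h.isLeftDescent_simple_mul_simple_mul_of_eq_three h3 hij hi hj)
  rw [h3']
  omega

end Hecke

section TemperleyLieb

variable {B W : Type} [Group W] {M : CoxeterMatrix B} {cs : CoxeterSystem M W}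
  {H : Type} [Ring H] [Algebra 𝔸 H] {TL : Type} [Ring TL] [Algebra 𝔸 TL]

theorem bprod_cons (t : W → TL) (i : B) (u : List B) :
    bprod cs t (i :: u) = bgen cs t i * bprod cs t u := by
  simp [bprod]

theorem commute_bgen_of_commute (h : Hecke cs H) (tl : TLQuot cs H TL h) {i j : B}
    (hc : cs.simple i * cs.simple j = cs.simple j * cs.simple i) :
    Commute (bgen cs (tElt cs h tl) i) (bgen cs (tElt cs h tl) j) := by
  have htt : Commute (tElt cs h tl (cs.simple i)) (tElt cs h tl (cs.simple j)) := by
    by_cases hij : cs.simple i = cs.simple j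
    · rw [hij]
    · simp only [Commute, SemiconjBy, tElt, ← map_mul, h.TT_simple_mul_TT_simple hij,
        h.TT_simple_mul_TT_simple (Ne.symm hij), hc]
  have ht1 : tElt cs h tl 1 = 1 := by simp [tElt, h.TT_one]
  simp only [bgen, ht1, ← smul_add]
  exact (((htt.add_right (Commute.one_right _)).add_left (Commute.one_left _)).smul_left
    vinv).smul_right vinv

def BprodWellDefined (cs : CoxeterSystem M W) (t : W → TL) (w : W) : Prop :=
  ∀ l l' : List B, cs.IsReduced l → cs.IsReduced l' →
    cs.wordProd l = w → cs.wordProd l' = w → bprod cs t l = bprod cs t l'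

theorem bgen_mul_bprod_eq_of_isLeftDescent (h : Hecke cs H) (tl : TLQuot cs H TL h)
    (hsl : SimplyLaced M) {w : W} (hw : w ∈ Wc cs)
    (ih : ∀ w' ∈ Wc cs, cs.length w' < cs.length w → BprodWellDefined cs (tElt cs h tl) w')
    {i j : B} (hi : cs.IsLeftDescent w i) (hj : cs.IsLeftDescent w j) {u u' : List B}
    (hu : cs.IsReduced u) (hu' : cs.IsReduced u') (hπu : cs.wordProd u = cs.simple i * w)
    (hπu' : cs.wordProd u' = cs.simple j * w) :
    bgen cs (tElt cs h tl) i * bprod cs (tElt cs h tl) u =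
      bgen cs (tElt cs h tl) j * bprod cs (tElt cs h tl) u' := by
  by_cases hij : cs.simple i = cs.simple j
  · rw [ih _ (simple_mul_mem_Wc cs hw hi) hi u u' hu hu' hπu (hij ▸ hπu')]
    simp only [bgen, hij]
  rcases hsl i j (fun e => hij (e ▸ rfl)) with h2 | h3
  · have hc := simple_mul_simple_comm_of_eq_two cs h2
    obtain ⟨r, hr, hπr⟩ := cs.exists_isReduced (cs.simple j * (cs.simple i * w))
    obtain ⟨hjr, hπjr⟩ := isReduced_cons_of_isLeftDescent cs hr
      (h.isLeftDescent_simple_mul_of_eq_two h2 hij hi hj) hπr.symm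
    obtain ⟨hir, hπir⟩ := isReduced_cons_of_isLeftDescent cs hr
      (h.isLeftDescent_simple_mul_of_eq_two (M.symmetric i j ▸ h2) (Ne.symm hij) hj hi)
      (by rw [← hπr, ← mul_assoc, ← mul_assoc, hc])
    rw [ih _ (simple_mul_mem_Wc cs hw hi) hi u _ hu hjr hπu hπjr,
      ih _ (simple_mul_mem_Wc cs hw hj) hj u' _ hu' hir hπu' hπir, bprod_cons, bprod_cons,
      ← mul_assoc, ← mul_assoc, (commute_bgen_of_commute h tl hc).eq]
  · exact absurd (h.isComplex_of_isLeftDescent_of_eq_three h3 hij hi hj) hw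

theorem bprodWellDefined_of_forall_length_lt (h : Hecke cs H) (tl : TLQuot cs H TL h)
    (hsl : SimplyLaced M) {w : W} (hw : w ∈ Wc cs)
    (ih : ∀ w' ∈ Wc cs, cs.length w' < cs.length w → BprodWellDefined cs (tElt cs h tl) w') :
    BprodWellDefined cs (tElt cs h tl) w := by
  intro l l' hr hr' hl hl'
  have hlen : l.length = l'.length := by rw [← hr.eq, ← hr'.eq, hl, hl']
  rcases l with _ | ⟨i, u⟩ <;> rcases l' with _ | ⟨j, u'⟩
  · rfl
  · simp at hlen
  · simp at hlen
  have tail : ∀ {k : B} {v : List B}, cs.wordProd (k :: v) = w →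
      cs.wordProd v = cs.simple k * w := fun hv => by
    rw [← hv, wordProd_cons, cs.simple_mul_simple_cancel_left]
  rw [bprod_cons, bprod_cons]
  exact bgen_mul_bprod_eq_of_isLeftDescent h tl hsl hw ih
    (hl ▸ isLeftDescent_wordProd_cons cs hr) (hl' ▸ isLeftDescent_wordProd_cons cs hr')
    (by simpa using hr.drop 1) (by simpa using hr'.drop 1) (tail hl) (tail hl')

end TemperleyLieb

/-- If `X` is simply laced and `w ∈ W_c`, then the monomial `b_{s₁} ⋯ b_{s_r}` is
independent of the choice of reduced expression `w = s₁ ⋯ s_r`. -/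
theorem bprod_well_defined {B W : Type} [Group W] {M : CoxeterMatrix B} (cs : CoxeterSystem M W)
    {H : Type} [Ring H] [Algebra 𝔸 H] {TL : Type} [Ring TL] [Algebra 𝔸 TL]
    (h : Hecke cs H) (tl : TLQuot cs H TL h)
    (hsl : SimplyLaced M) (w : W) (hw : w ∈ Wc cs)
    (l l' : List B) (hredl : cs.IsReduced l) (hredl' : cs.IsReduced l')
    (hl : cs.wordProd l = w) (hl' : cs.wordProd l' = w) :
    bprod cs (tElt cs h tl) l = bprod cs (tElt cs h tl) l' := by
  suffices ∀ n, ∀ w ∈ Wc cs, cs.length w = n → BprodWellDefined cs (tElt cs h tl) w from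
    this _ w hw rfl l l' hredl hredl' hl hl'
  intro n
  induction n using Nat.strong_induction_on with
  | _ n ih =>
    rintro w hw rfl
    exact bprodWellDefined_of_forall_length_lt h tl hsl hw fun w' hw' hlt => ih _ hlt w' hw' rfl

end TLpaper
end
end
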